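/- arXiv:1603.08113 — 2 statements merged into one kernel-verified Lean document; each statement's English description precedes it below -/
import Mathlib

section
/- Fix W a real symmetric N×N matrix, F ⊆ [1,N]² with W F-identifiable, and S⋆ = Supp(W). Define for S ⊆ F̄, c(S) = min over nonzero symmetric A supported in S of ‖A K − K A‖/‖A‖, where K is a symmetric matrix with exactly the same eigenspaces as W. Then c₀(S⋆) = min over supports S ≠ S⋆ with |S| ≤ |S⋆| of c(S) is strictly positive. -/
/-!
On the space `E(S)` of symmetric matrices supported in `S`, the commutator map `A ↦ AK - KA` is
injective whenever `S` avoids `F`, `S ≠ S⋆` and `|S| ≤ |S⋆|`. Indeed, a symmetric matrix commuting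
with `K` commutes with `W`, so by `F`-identifiability it is a multiple `tW`; the cardinality condition
gives an entry of `S⋆` outside `S`, where the matrix vanishes but `W` does not, so `t = 0`.
An injective linear map on a finite-dimensional space is bounded below, and there are only finitely
many supports `S`.
-/

open Matrix
open scoped NNReal

attribute [local instance] Matrix.frobeniusNormedAddCommGroup Matrix.frobeniusNormedRing
attribute [local instance] Matrix.frobeniusNormedSpace

theorem LinearMap.exists_norm_le_mul_norm_of_disjoint_ker {𝕜 E F : Type*}
    [NontriviallyNormedField 𝕜] [CompleteSpace 𝕜]
    [NormedAddCommGroup E] [NormedSpace 𝕜 E] [FiniteDimensional 𝕜 E]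
    [NormedAddCommGroup F] [NormedSpace 𝕜 F]
    (f : E →ₗ[𝕜] F) {V : Submodule 𝕜 E} (hV : Disjoint V (LinearMap.ker f)) :
    ∃ C : ℝ≥0, ∀ x ∈ V, ‖x‖ ≤ C * ‖f x‖ := by
  have hker : LinearMap.ker (f.domRestrict V) = ⊥ := by
    rw [LinearMap.ker_domRestrict, ← Submodule.disjoint_iff_comap_eq_bot]
    exact hV
  obtain ⟨C, -, hC⟩ := (f.domRestrict V).exists_antilipschitzWith hker
  exact ⟨C, fun x hx => hC.le_mul_norm (map_zero _) ⟨x, hx⟩⟩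

namespace Matrix

variable {n R : Type*} [Fintype n]

def symmSupportedIn [CommSemiring R] (S : Set (n × n)) : Submodule R (Matrix n n R) where
  carrier := {A | A.IsSymm ∧ ∀ p, p ∉ S → A p.1 p.2 = 0}
  zero_mem' := ⟨isSymm_zero, fun _ _ => rfl⟩
  add_mem' := fun ⟨hA, hAS⟩ ⟨hB, hBS⟩ =>
    ⟨hA.add hB, fun p hp => by rw [add_apply, hAS p hp, hBS p hp, add_zero]⟩
  smul_mem' := fun c _ ⟨hA, hAS⟩ =>
    ⟨hA.smul c, fun p hp => by rw [smul_apply, hAS p hp, smul_zero]⟩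

def IsIdentifiable [CommSemiring R] (F : Set (n × n)) (W : Matrix n n R) : Prop :=
  ∀ A : Matrix n n R, A.IsSymm → (∀ p ∈ F, A p.1 p.2 = 0) → A * W = W * A → ∃ t : R, A = t • W

theorem IsIdentifiable.eq_zero_of_mem_symmSupportedIn [CommRing R] [NoZeroDivisors R]
    {F S : Set (n × n)} {W A : Matrix n n R} (hid : W.IsIdentifiable F)
    (hSF : ∀ p ∈ S, p ∉ F) {p : n × n} (hpS : p ∉ S) (hWp : W p.1 p.2 ≠ 0)
    (hA : A ∈ symmSupportedIn S) (hAW : A * W = W * A) : A = 0 := by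
  obtain ⟨hAsymm, hAS⟩ := hA
  have hAF : ∀ q ∈ F, A q.1 q.2 = 0 := fun q hqF => hAS q fun hqS => hSF q hqS hqF
  obtain ⟨t, rfl⟩ := hid A hAsymm hAF hAW
  have ht : t = 0 := by simpa [hWp] using hAS p hpS
  rw [ht, zero_smul]

def commutatorMap [CommRing R] [DecidableEq n] (K : Matrix n n R) : Matrix n n R →ₗ[R] Matrix n n R :=
  LinearMap.mulRight R K - LinearMap.mulLeft R K

theorem disjoint_symmSupportedIn_ker_commutatorMap [CommRing R] [NoZeroDivisors R] [DecidableEq n]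
    {F S : Set (n × n)} {W K : Matrix n n R} (hid : W.IsIdentifiable F)
    (hsame : ∀ A : Matrix n n R, A.IsSymm → (A * K = K * A ↔ A * W = W * A))
    (hSF : ∀ p ∈ S, p ∉ F) {p : n × n} (hpS : p ∉ S) (hWp : W p.1 p.2 ≠ 0) :
    Disjoint (symmSupportedIn S) (LinearMap.ker (commutatorMap K)) := by
  rw [Submodule.disjoint_def]
  intro A hA hAK
  have hcomm : A * K = K * A := sub_eq_zero.mp hAK
  exact hid.eq_zero_of_mem_symmSupportedIn hSF hpS hWp hA ((hsame A hA.1).mp hcomm)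

end Matrix

theorem c0_pos_general {N : ℕ}
    (W K : Matrix (Fin N) (Fin N) ℝ)
    (F : Finset (Fin N × Fin N))
    -- `K` has exactly the same eigenspaces as `W`
    (hsame : ∀ A : Matrix (Fin N) (Fin N) ℝ, A.IsSymm →
      (A * K = K * A ↔ A * W = W * A))
    -- `W` is `F`-identifiable
    (hid : ∀ A : Matrix (Fin N) (Fin N) ℝ, A.IsSymm →
      (∀ p ∈ F, A p.1 p.2 = 0) → A * W = W * A → ∃ t : ℝ, A = t • W)
    (Sstar : Finset (Fin N × Fin N))
    (hSstar : ∀ p : Fin N × Fin N, p ∈ Sstar ↔ W p.1 p.2 ≠ 0) :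
    ∃ c : ℝ, 0 < c ∧
      ∀ S : Finset (Fin N × Fin N), (∀ p ∈ S, p ∉ F) →
        S ≠ Sstar → S.card ≤ Sstar.card →
        ∀ A : Matrix (Fin N) (Fin N) ℝ, A ≠ 0 → A.IsSymm →
          (∀ p : Fin N × Fin N, p ∉ S → A p.1 p.2 = 0) →
          c ≤ ‖A * K - K * A‖ / ‖A‖ := by
  have hbound : ∀ S : {S : Finset (Fin N × Fin N) //
      (∀ p ∈ S, p ∉ F) ∧ S ≠ Sstar ∧ S.card ≤ Sstar.card},
      ∃ C : ℝ≥0, ∀ A ∈ symmSupportedIn (S.1 : Set (Fin N × Fin N)),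
        ‖A‖ ≤ C * ‖commutatorMap K A‖ := by
    rintro ⟨S, hSF, hne, hcard⟩
    obtain ⟨p, hpW, hpS⟩ : ∃ p ∈ Sstar, p ∉ S :=
      Finset.not_subset.mp fun h => hne (Finset.eq_of_subset_of_card_le h hcard).symm
    have hdisj := disjoint_symmSupportedIn_ker_commutatorMap (F := (F : Set (Fin N × Fin N)))
      hid hsame hSF hpS ((hSstar p).mp hpW)
    exact (commutatorMap K).exists_norm_le_mul_norm_of_disjoint_ker hdisj
  choose C hC using hbound
  obtain ⟨M, hM⟩ := Finite.exists_le C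
  -- `M + 1` rather than `M`, which may be `0`
  refine ⟨((M : ℝ) + 1)⁻¹, by positivity, fun S hSF hne hcard A hA0 hAsymm hAS => ?_⟩
  rw [le_div_iff₀ (norm_pos_iff.mpr hA0), inv_mul_le_iff₀ (by positivity)]
  calc ‖A‖ ≤ C ⟨S, hSF, hne, hcard⟩ * ‖A * K - K * A‖ := hC _ A ⟨hAsymm, hAS⟩
    _ ≤ ((M : ℝ) + 1) * ‖A * K - K * A‖ := by
      gcongr
      exact (NNReal.coe_le_coe.mpr (hM _)).trans (le_add_of_nonneg_right zero_le_one)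

theorem c0_pos {N : ℕ}
    (W K : Matrix (Fin N) (Fin N) ℝ)
    (hWsymm : W.IsSymm) (hKsymm : K.IsSymm)
    (F : Finset (Fin N × Fin N))
    (hWF : ∀ p ∈ F, W p.1 p.2 = 0)
    -- `K` has exactly the same eigenspaces as `W`
    (hsame : ∀ A : Matrix (Fin N) (Fin N) ℝ, A.IsSymm →
      (A * K = K * A ↔ A * W = W * A))
    -- `W` is `F`-identifiable
    (hid : ∀ A : Matrix (Fin N) (Fin N) ℝ, A.IsSymm →
      (∀ p ∈ F, A p.1 p.2 = 0) → A * W = W * A → ∃ t : ℝ, A = t • W)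
    (Sstar : Finset (Fin N × Fin N))
    (hSstar : ∀ p : Fin N × Fin N, p ∈ Sstar ↔ W p.1 p.2 ≠ 0) :
    ∃ c : ℝ, 0 < c ∧
      ∀ S : Finset (Fin N × Fin N), (∀ p ∈ S, p ∉ F) →
        S ≠ Sstar → S.card ≤ Sstar.card →
        ∀ A : Matrix (Fin N) (Fin N) ℝ, A ≠ 0 → A.IsSymm →
          (∀ p : Fin N × Fin N, p ∉ S → A p.1 p.2 = 0) →
          c ≤ ‖A * K - K * A‖ / ‖A‖ :=
  c0_pos_general W K F hsame hid Sstar hSstar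
end

section
/- Deterministic form of Theorem 2 (support recovery): let W be symmetric and F-identifiable with support S⋆, K symmetric commuting with W, λ > 0 with λ|S⋆| < c₀(S⋆). If the estimation error satisfies 4‖K̂ − K‖ < c₀(S⋆) − λ|S⋆| and 2‖K̂ − K‖ < λ, then S⋆ is the unique minimizer of S ↦ Q(S) = min_{A ∈ E(S)\{0}} ‖A K̂ − K̂ A‖/‖A‖ + λ|S| over supports S ⊆ F̄. -/
/-!
Perturbing `K` to `K̂` moves every commutator ratio `‖AK - KA‖/‖A‖` by at most `2‖K̂ - K‖`.
Since `W` commutes with `K`, this gives `Q(S⋆) ≤ 2‖K̂ - K‖ + λ|S⋆|`. A support `S ≠ S⋆` with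
`|S| ≤ |S⋆|` has `Q(S) ≥ c₀(S⋆) - 2‖K̂ - K‖`, which beats that bound when `4‖K̂ - K‖ + λ|S⋆| < c₀(S⋆)`;
a larger support pays at least `λ(|S⋆| + 1)` in penalty alone, which beats it when `2‖K̂ - K‖ < λ`.
-/

open Matrix ENNReal

attribute [local instance] Matrix.frobeniusNormedAddCommGroup Matrix.frobeniusNormedRing

/-- The penalized criterion `Q(S)` with values in `ℝ≥0∞` (the infimum over an
empty collection being `∞`). -/
noncomputable def QE {N : ℕ} (Khat : Matrix (Fin N) (Fin N) ℝ) (lam : ℝ)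
    (S : Finset (Fin N × Fin N)) : ℝ≥0∞ :=
  (⨅ A : {A : Matrix (Fin N) (Fin N) ℝ // A ≠ 0 ∧ A.IsSymm ∧
      ∀ p : Fin N × Fin N, p ∉ S → A p.1 p.2 = 0},
    ENNReal.ofReal (‖(A : Matrix (Fin N) (Fin N) ℝ) * Khat -
        Khat * (A : Matrix (Fin N) (Fin N) ℝ)‖ /
      ‖(A : Matrix (Fin N) (Fin N) ℝ)‖)) +
  ENNReal.ofReal lam * S.card

/-- The constant `c₀(S⋆)` with values in `ℝ≥0∞`. -/
noncomputable def c0E {N : ℕ} (K : Matrix (Fin N) (Fin N) ℝ)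
    (Sstar : Finset (Fin N × Fin N)) : ℝ≥0∞ :=
  ⨅ (S : Finset (Fin N × Fin N)) (_ : S ≠ Sstar) (_ : S.card ≤ Sstar.card)
    (A : {A : Matrix (Fin N) (Fin N) ℝ // A ≠ 0 ∧ A.IsSymm ∧
      ∀ p : Fin N × Fin N, p ∉ S → A p.1 p.2 = 0}),
    ENNReal.ofReal (‖(A : Matrix (Fin N) (Fin N) ℝ) * K -
        K * (A : Matrix (Fin N) (Fin N) ℝ)‖ /
      ‖(A : Matrix (Fin N) (Fin N) ℝ)‖)

section NormedRing

variable {R : Type*} [NormedRing R]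

theorem norm_commutator_sub_commutator_le (a b c : R) :
    ‖(a * b - b * a) - (a * c - c * a)‖ ≤ 2 * ‖a‖ * ‖b - c‖ := by
  have hsplit : (a * b - b * a) - (a * c - c * a) = a * (b - c) - (b - c) * a := by
    simp only [mul_sub, sub_mul]; abel
  calc ‖(a * b - b * a) - (a * c - c * a)‖
      = ‖a * (b - c) - (b - c) * a‖ := by rw [hsplit]
    _ ≤ ‖a * (b - c)‖ + ‖(b - c) * a‖ := norm_sub_le _ _
    _ ≤ ‖a‖ * ‖b - c‖ + ‖b - c‖ * ‖a‖ := add_le_add (norm_mul_le _ _) (norm_mul_le _ _)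
    _ = 2 * ‖a‖ * ‖b - c‖ := by ring

theorem norm_commutator_div_le_add (a b c : R) :
    ‖a * b - b * a‖ / ‖a‖ ≤ ‖a * c - c * a‖ / ‖a‖ + 2 * ‖b - c‖ := by
  rcases (norm_nonneg a).eq_or_lt with ha | ha
  · rw [← ha, _root_.div_zero, _root_.div_zero, zero_add]
    positivity
  have hnorm : ‖a * b - b * a‖ ≤ ‖a * c - c * a‖ + 2 * ‖a‖ * ‖b - c‖ :=
    calc ‖a * b - b * a‖
        = ‖(a * c - c * a) + ((a * b - b * a) - (a * c - c * a))‖ := by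
          rw [add_sub_cancel]
      _ ≤ ‖a * c - c * a‖ + ‖(a * b - b * a) - (a * c - c * a)‖ := norm_add_le _ _
      _ ≤ ‖a * c - c * a‖ + 2 * ‖a‖ * ‖b - c‖ := by
        gcongr; exact norm_commutator_sub_commutator_le a b c
  rw [div_add' _ _ _ ha.ne', div_le_div_iff_of_pos_right ha]
  linarith

theorem norm_commutator_div_le_of_commute {a b c : R} (hac : a * c = c * a) :
    ‖a * b - b * a‖ / ‖a‖ ≤ 2 * ‖b - c‖ := by
  simpa [hac] using norm_commutator_div_le_add a b c

end NormedRing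

section Criterion

variable {N : ℕ}

theorem QE_le_of_mem {Khat A : Matrix (Fin N) (Fin N) ℝ} {lam : ℝ} {S : Finset (Fin N × Fin N)}
    (hA : A ≠ 0 ∧ A.IsSymm ∧ ∀ p : Fin N × Fin N, p ∉ S → A p.1 p.2 = 0) :
    QE Khat lam S ≤ ENNReal.ofReal (‖A * Khat - Khat * A‖ / ‖A‖) + ENNReal.ofReal lam * S.card := by
  unfold QE
  gcongr
  exact iInf_le_of_le ⟨A, hA⟩ le_rfl

theorem ofReal_mul_card_le_QE (Khat : Matrix (Fin N) (Fin N) ℝ) (lam : ℝ)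
    (S : Finset (Fin N × Fin N)) : ENNReal.ofReal lam * S.card ≤ QE Khat lam S :=
  le_add_self

theorem c0E_le_QE_add {K Khat : Matrix (Fin N) (Fin N) ℝ} {lam : ℝ}
    {S Sstar : Finset (Fin N × Fin N)} (hne : S ≠ Sstar) (hcard : S.card ≤ Sstar.card) :
    c0E K Sstar ≤ QE Khat lam S + ENNReal.ofReal (2 * ‖Khat - K‖) := by
  refine le_trans ?_ (add_le_add_left (le_self_add : _ ≤ _ + ENNReal.ofReal lam * S.card) _)
  rw [ENNReal.iInf_add]
  refine le_iInf fun A => ?_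
  calc c0E K Sstar
      ≤ ENNReal.ofReal (‖A.1 * K - K * A.1‖ / ‖A.1‖) :=
        iInf_le_of_le S <| iInf_le_of_le hne <| iInf_le_of_le hcard <| iInf_le_of_le A le_rfl
    _ ≤ ENNReal.ofReal (‖A.1 * Khat - Khat * A.1‖ / ‖A.1‖ + 2 * ‖K - Khat‖) :=
        ENNReal.ofReal_le_ofReal (norm_commutator_div_le_add _ _ _)
    _ = ENNReal.ofReal (‖A.1 * Khat - Khat * A.1‖ / ‖A.1‖) +
          ENNReal.ofReal (2 * ‖Khat - K‖) := by
        rw [norm_sub_rev K Khat, ENNReal.ofReal_add (by positivity) (by positivity)]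

end Criterion

theorem Sstar_unique_minimizer_general {N : ℕ}
    (W K Khat : Matrix (Fin N) (Fin N) ℝ)
    (hWsymm : W.IsSymm)
    (hcomm : W * K = K * W) (hW0 : W ≠ 0)
    (F : Finset (Fin N × Fin N))
    (Sstar : Finset (Fin N × Fin N))
    (hSstar : ∀ p : Fin N × Fin N, p ∈ Sstar ↔ W p.1 p.2 ≠ 0)
    (lam : ℝ)
    (h2 : ENNReal.ofReal (4 * ‖Khat - K‖) + ENNReal.ofReal lam * Sstar.card <
      c0E K Sstar)
    (h3 : ENNReal.ofReal (2 * ‖Khat - K‖) < ENNReal.ofReal lam) :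
    ∀ S : Finset (Fin N × Fin N), (∀ p ∈ S, p ∉ F) → S ≠ Sstar →
      QE Khat lam Sstar < QE Khat lam S := by
  intro S _ hne
  set ε := ‖Khat - K‖
  have hW : W ≠ 0 ∧ W.IsSymm ∧ ∀ p : Fin N × Fin N, p ∉ Sstar → W p.1 p.2 = 0 :=
    ⟨hW0, hWsymm, fun p hp => not_not.mp (mt (hSstar p).mpr hp)⟩
  have hQstar : QE Khat lam Sstar ≤ ENNReal.ofReal (2 * ε) + ENNReal.ofReal lam * Sstar.card :=
    (QE_le_of_mem hW).trans <| add_le_add_left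
      (ENNReal.ofReal_le_ofReal (norm_commutator_div_le_of_commute hcomm)) _
  rcases le_or_gt S.card Sstar.card with hcard | hcard
  · refine (ENNReal.add_lt_add_iff_right (ofReal_ne_top (r := 2 * ε))).mp ?_
    calc QE Khat lam Sstar + ENNReal.ofReal (2 * ε)
        ≤ ENNReal.ofReal (2 * ε) + ENNReal.ofReal lam * Sstar.card + ENNReal.ofReal (2 * ε) := by
          gcongr
      _ = ENNReal.ofReal (4 * ε) + ENNReal.ofReal lam * Sstar.card := by
          rw [add_right_comm, ← ENNReal.ofReal_add (by positivity) (by positivity)]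
          ring_nf
      _ < c0E K Sstar := h2
      _ ≤ QE Khat lam S + ENNReal.ofReal (2 * ε) := c0E_le_QE_add hne hcard
  · have hcard' : (Sstar.card : ℝ≥0∞) + 1 ≤ S.card := by exact_mod_cast hcard
    calc QE Khat lam Sstar
        ≤ ENNReal.ofReal (2 * ε) + ENNReal.ofReal lam * Sstar.card := hQstar
      _ < ENNReal.ofReal lam + ENNReal.ofReal lam * Sstar.card :=
          ENNReal.add_lt_add_right (mul_ne_top ofReal_ne_top (natCast_ne_top _)) h3
      _ = ENNReal.ofReal lam * (Sstar.card + 1) := by ring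
      _ ≤ ENNReal.ofReal lam * S.card := by gcongr
      _ ≤ QE Khat lam S := ofReal_mul_card_le_QE Khat lam S

/-- Deterministic support recovery: under the stated error bounds, `S⋆` is the
unique minimizer of the penalized criterion over supports avoiding `F`. -/
theorem Sstar_unique_minimizer {N : ℕ}
    (W K Khat : Matrix (Fin N) (Fin N) ℝ)
    (hWsymm : W.IsSymm) (hKsymm : K.IsSymm)
    (hcomm : W * K = K * W) (hW0 : W ≠ 0)
    (F : Finset (Fin N × Fin N))
    (hWF : ∀ p ∈ F, W p.1 p.2 = 0)
    -- `W` is `F`-identifiable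
    (hid : ∀ A : Matrix (Fin N) (Fin N) ℝ, A.IsSymm →
      (∀ p ∈ F, A p.1 p.2 = 0) → A * K = K * A → ∃ t : ℝ, A = t • W)
    (Sstar : Finset (Fin N × Fin N))
    (hSstar : ∀ p : Fin N × Fin N, p ∈ Sstar ↔ W p.1 p.2 ≠ 0)
    (lam : ℝ) (hlam : 0 < lam)
    (h1 : ENNReal.ofReal lam * Sstar.card < c0E K Sstar)
    (h2 : ENNReal.ofReal (4 * ‖Khat - K‖) + ENNReal.ofReal lam * Sstar.card <
      c0E K Sstar)
    (h3 : ENNReal.ofReal (2 * ‖Khat - K‖) < ENNReal.ofReal lam) :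
    ∀ S : Finset (Fin N × Fin N), (∀ p ∈ S, p ∉ F) → S ≠ Sstar →
      QE Khat lam Sstar < QE Khat lam S :=
  Sstar_unique_minimizer_general W K Khat hWsymm hcomm hW0 F Sstar hSstar lam h2 h3
end
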